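/- In ℓ^∞, the sequence x_n (first n coordinates 0, rest equal to 1) order converges to 0 but does not converge to 0 in the interval topology τ_e, since it eventually avoids no basic neighborhood of the form (-e₁, e₁). Hence τ_e-convergence is strictly stronger than order convergence. -/

import Mathlib

universe u
variable {E : Type u} [Lattice E] [AddCommGroup E] [CovariantClass E E (· + ·) (· ≤ ·)]

/-- A net `x` order converges to `a`: there is a downward directed set `S` of upper bounds
with infimum `0` such that each `y ∈ S` eventually dominates `|x α - a|`. -/
def OrderConv {ι : Type*} [Preorder ι] (x : ι → E) (a : E) : Prop :=
  ∃ S : Set E, S.Nonempty ∧ DirectedOn (· ≥ ·) S ∧ IsGLB S 0 ∧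
    ∀ y ∈ S, ∃ α₀, ∀ α, α₀ ≤ α → |x α - a| ≤ y

/-- `A` is quasi-order closed: whenever a net in `A` increases to its supremum `a`
or decreases to its infimum `a`, then `a ∈ A`. -/
def QuasiOrderClosed (A : Set E) : Prop :=
  ∀ (ι : Type u) [Preorder ι] [Nonempty ι] [IsDirected ι (· ≤ ·)]
    (x : ι → E) (a : E), (∀ α, x α ∈ A) →
    ((Monotone x ∧ IsLUB (Set.range x) a) ∨ (Antitone x ∧ IsGLB (Set.range x) a)) →
    a ∈ A

/-- `A` is order closed: it contains the limits of order convergent nets contained in it. -/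
def OrderClosedSet (A : Set E) : Prop :=
  ∀ (ι : Type u) [Preorder ι] [Nonempty ι] [IsDirected ι (· ≤ ·)]
    (x : ι → E) (a : E), (∀ α, x α ∈ A) → OrderConv x a → a ∈ A

/-- `A` is solid. -/
def Solid (A : Set E) : Prop := ∀ x ∈ A, ∀ y : E, |y| ≤ |x| → y ∈ A

/-- Dedekind completeness: every nonempty set bounded above has a supremum. -/
def DedekindComplete (E : Type u) [Lattice E] : Prop :=
  ∀ A : Set E, A.Nonempty → BddAbove A → ∃ s, IsLUB A s

/-- `ℓ^∞`, realized as the bounded (automatically continuous) functions `ℕ → ℝ`,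
with the pointwise (coordinatewise) order. -/
noncomputable abbrev Linf : Type := BoundedContinuousFunction ℕ ℝ

/-- `e₁ = (1,0,0,…)`. -/
noncomputable def eOne : Linf :=
  BoundedContinuousFunction.ofNormedAddCommGroup (fun k => if k = 0 then 1 else 0)
    continuous_of_discreteTopology 1 (by intro k; by_cases h : k = 0 <;> simp [h])

/-- `xSeq n` has its first `n` coordinates equal to `0` and the rest equal to `1`. -/
noncomputable def xSeq (n : ℕ) : Linf :=
  BoundedContinuousFunction.ofNormedAddCommGroup (fun k => if k < n then 0 else 1)
    continuous_of_discreteTopology 1 (by intro k; by_cases h : k < n <;> simp [h])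

/-- The interval topology `τ_e`, generated by the open order intervals. -/
def tauE (E : Type u) [Lattice E] : TopologicalSpace E :=
  TopologicalSpace.generateFrom {S : Set E | ∃ a b : E, a < b ∧ S = Set.Ioo a b}

/-!
In `ℓ^∞` the sequence `xSeq` decreases to `0`, so it order converges to `0` with itself as
dominating sequence. But every `xSeq n` has a coordinate equal to `1` outside the first one, so
it never lies below `e₁`; hence it never enters the `τ_e`-open interval `(-e₁, e₁)` around `0`.
-/

theorem isOpen_Ioo_tauE {L : Type u} [Lattice L] {a b : L} (hab : a < b) :
    @IsOpen L (tauE L) (Set.Ioo a b) :=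
  TopologicalSpace.GenerateOpen.basic _ ⟨a, b, hab, rfl⟩

theorem Linf.le_iff {f g : Linf} : f ≤ g ↔ ∀ k, f k ≤ g k := Iff.rfl

theorem xSeq_apply (n k : ℕ) : xSeq n k = if k < n then 0 else 1 := rfl

theorem eOne_apply (k : ℕ) : eOne k = if k = 0 then 1 else 0 := rfl

theorem xSeq_antitone : Antitone xSeq := by
  intro m n hmn
  refine Linf.le_iff.mpr fun k => ?_
  simp only [xSeq_apply]
  split_ifs with hkn hkm hkm <;> norm_num
  exact hkn (hkm.trans_le hmn)

theorem xSeq_nonneg (n : ℕ) : 0 ≤ xSeq n := Linf.le_iff.mpr fun k => by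
  simp only [xSeq_apply, BoundedContinuousFunction.coe_zero, Pi.zero_apply]
  split_ifs <;> norm_num

theorem isGLB_range_xSeq : IsGLB (Set.range xSeq) 0 := by
  refine ⟨by rintro _ ⟨n, rfl⟩; exact xSeq_nonneg n, fun b hb => Linf.le_iff.mpr fun k => ?_⟩
  -- the `k`-th coordinate of `xSeq (k + 1)` is already `0`
  simpa [xSeq_apply] using Linf.le_iff.mp (hb (Set.mem_range_self (k + 1))) k

theorem eOne_pos : (0 : Linf) < eOne := by
  refine lt_of_le_of_ne (Linf.le_iff.mpr fun k => ?_) fun h => ?_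
  · simp only [eOne_apply, BoundedContinuousFunction.coe_zero, Pi.zero_apply]
    split_ifs <;> norm_num
  · simpa [eOne_apply] using congrArg (fun f : Linf => f 0) h

theorem not_xSeq_le_eOne (n : ℕ) : ¬ xSeq n ≤ eOne := fun h => by
  have h_coord := Linf.le_iff.mp h (n + 1)
  rw [xSeq_apply, eOne_apply, if_neg (by omega), if_neg (by omega)] at h_coord
  norm_num at h_coord

theorem xSeq_notMem_Ioo_neg_eOne_eOne (n : ℕ) : xSeq n ∉ Set.Ioo (-eOne) eOne :=
  fun h => not_xSeq_le_eOne n h.2.le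

/-- in `ℓ^∞`, the sequence `xSeq` order converges to `0` (with a dominating
sequence `y_n ↓ 0`), is never in the basic neighborhood `(-e₁, e₁)` of `0`, and does not
`τ_e`-converge to `0`; hence `τ_e`-convergence is strictly stronger than order convergence. -/
theorem orderConv_not_tauE_conv :
    (∃ y : ℕ → Linf, Antitone y ∧ IsGLB (Set.range y) 0 ∧ ∀ n, |xSeq n - 0| ≤ y n) ∧
    (∀ n : ℕ, xSeq n ∉ Set.Ioo (-eOne) eOne) ∧
    ¬ Filter.Tendsto xSeq Filter.atTop (@nhds Linf (tauE Linf) 0) := by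
  refine ⟨⟨xSeq, xSeq_antitone, isGLB_range_xSeq, fun n => ?_⟩,
    xSeq_notMem_Ioo_neg_eOne_eOne, fun h_tendsto => ?_⟩
  · rw [sub_zero, abs_of_nonneg (xSeq_nonneg n)]
  · have h_nhds : Set.Ioo (-eOne) eOne ∈ @nhds Linf (tauE Linf) 0 :=
      @IsOpen.mem_nhds Linf (tauE Linf) _ _
        (isOpen_Ioo_tauE ((neg_neg_of_pos eOne_pos).trans eOne_pos))
        ⟨neg_neg_of_pos eOne_pos, eOne_pos⟩
    obtain ⟨n, hn⟩ := (h_tendsto.eventually_mem h_nhds).exists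
    exact xSeq_notMem_Ioo_neg_eOne_eOne n hn
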